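/- arXiv:2008.07428 — 4 statements merged into one kernel-verified Lean document; each statement's English description precedes it below -/
import Mathlib

section
/- Under the GT-SARAH setup, for all s ≥ 1 and t ∈ {1,…,q}: E[‖v^{t,s} − ∇f(x^{t,s})‖²] ≤ (3nα²L²/B) Σ_{u=0}^{t−1} E[‖v̄^{u,s}‖²] + (6L²/B) Σ_{u=0}^{t} E[‖x^{u,s} − J x^{u,s}‖²]. -/
/-!
All draws up to the current epoch form one point `g` of the finite product
`(Fin q × Fin s × Fin n × Fin B) → Fin m`; it is uniformly distributed, and every iterate is a
function of it, so expectations become averages over `g`. The error `v^t - ∇f(x^t)` of the SARAH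
estimator telescopes into a sum of terms, one per draw, each centred in its own draw and depending
on earlier draws only. Averaging over one coordinate with the others fixed makes these terms
pairwise orthogonal, so the mean-square error is the sum of their variances, each at most
`L²/B² · ‖x^{u+1} - x^u‖²` by mean-squared smoothness. Gradient tracking moves the network average
by `-α v̄^u`, so `‖x^{u+1} - x^u‖²` splits into the two consensus errors and `α² ‖v̄^u‖²`.
-/

open MeasureTheory Finset ProbabilityTheory Function

section UniformCoordinates

variable {κ β E : Type*}

theorem update_funSplitAt_symm [DecidableEq κ] (k : κ) (a b : β) (r : {j // j ≠ k} → β) :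
    update ((Equiv.funSplitAt k β).symm (b, r)) k a = (Equiv.funSplitAt k β).symm (a, r) := by
  funext j
  rcases eq_or_ne j k with rfl | h
  · simp [Equiv.funSplitAt, Equiv.piSplitAt]
  · simp [Equiv.funSplitAt, Equiv.piSplitAt, h]

theorem DependsOn.apply_update_eq [DecidableEq κ] {k : κ} {P : (κ → β) → E}
    (hP : DependsOn P {k}ᶜ) (g : κ → β) (a : β) : P (Function.update g k a) = P g :=
  hP fun _ hj => update_of_ne hj a g

variable [NormedAddCommGroup E] [InnerProductSpace ℝ E] [Fintype β]

theorem sum_norm_sub_mean_sq_le {ι : Type*} [Fintype ι] (w : ι → E) :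
    ∑ a, ‖w a - (Fintype.card ι : ℝ)⁻¹ • ∑ b, w b‖ ^ 2 ≤ ∑ a, ‖w a‖ ^ 2 := by
  set c := (Fintype.card ι : ℝ)⁻¹ • ∑ b, w b
  rcases (Fintype.card ι).eq_zero_or_pos with hN | hN
  · simp [c, hN]
  have hsum : ∑ b, w b = (Fintype.card ι : ℝ) • c := by
    rw [smul_smul, mul_inv_cancel₀ (by positivity), one_smul]
  have hexpand : ∑ a, ‖w a - c‖ ^ 2 = ∑ a, ‖w a‖ ^ 2 - (Fintype.card ι : ℝ) * ‖c‖ ^ 2 := by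
    simp only [norm_sub_sq_real, sum_add_distrib, sum_sub_distrib, ← mul_sum, ← sum_inner,
      hsum, real_inner_smul_left, real_inner_self_eq_norm_sq, sum_const, card_univ,
      nsmul_eq_mul]
    ring
  rw [hexpand]
  nlinarith [sq_nonneg ‖c‖]

noncomputable def sampleDev (k : κ) (w : β → (κ → β) → E) (g : κ → β) : E :=
  w (g k) g - (Fintype.card β : ℝ)⁻¹ • ∑ a, w a g

theorem dependsOn_sampleDev {k : κ} {w : β → (κ → β) → E} {S : Set κ}
    (hw : ∀ a, DependsOn (w a) S) (hk : k ∈ S) : DependsOn (sampleDev k w) S :=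
  fun g₁ g₂ h => by simp only [sampleDev, h k hk, hw _ h]

variable [DecidableEq κ]

def IsCenteredAt (k : κ) (Z : (κ → β) → E) : Prop :=
  ∀ g, ∑ a, Z (update g k a) = 0

theorem isCenteredAt_sampleDev [Nonempty β] {k : κ} {w : β → (κ → β) → E}
    (hw : ∀ a, DependsOn (w a) {k}ᶜ) : IsCenteredAt k (sampleDev k w) := fun g => by
  have hN : (Fintype.card β : ℝ) ≠ 0 := Nat.cast_ne_zero.mpr Fintype.card_ne_zero
  simp only [sampleDev, update_self, fun a => (hw a).apply_update_eq g, sum_sub_distrib,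
    sum_const, card_univ, ← Nat.cast_smul_eq_nsmul ℝ, smul_smul, mul_inv_cancel₀ hN, one_smul,
    sub_self]

variable [Fintype κ]

theorem sum_sum_update_eq_card_smul {M : Type*} [AddCommMonoid M] (k : κ) (F : (κ → β) → M) :
    ∑ g : κ → β, ∑ a, F (update g k a) = Fintype.card β • ∑ g, F g := by
  let e := Equiv.funSplitAt k β
  rw [← e.symm.sum_comp, ← e.symm.sum_comp, Fintype.sum_prod_type, Fintype.sum_prod_type]
  simp only [e, update_funSplitAt_symm]
  rw [sum_const, card_univ, sum_comm]

theorem sum_inner_eq_zero_of_isCenteredAt [Nonempty β] {k : κ} {P Q : (κ → β) → E}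
    (hP : DependsOn P {k}ᶜ) (hQ : IsCenteredAt k Q) : ∑ g, inner ℝ (P g) (Q g) = 0 := by
  have hcard : Fintype.card β • ∑ g, inner ℝ (P g) (Q g) = 0 := by
    rw [← sum_sum_update_eq_card_smul k]
    refine sum_eq_zero fun g _ => ?_
    simp only [hP.apply_update_eq, ← inner_sum, hQ g, inner_zero_right]
  exact (smul_eq_zero.mp hcard).resolve_left Fintype.card_ne_zero

theorem sum_norm_sq_sum_eq_of_isCenteredAt [Nonempty β] {J : Type*} [Fintype J] [DecidableEq J]
    (c : J → κ) (Z : J → (κ → β) → E) (hZ : ∀ j, IsCenteredAt (c j) (Z j))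
    (hZc : ∀ j j', j ≠ j' → DependsOn (Z j) {c j'}ᶜ ∨ DependsOn (Z j') {c j}ᶜ) :
    ∑ g, ‖∑ j, Z j g‖ ^ 2 = ∑ j, ∑ g, ‖Z j g‖ ^ 2 := by
  have hexpand : ∀ g, ‖∑ j, Z j g‖ ^ 2 = ∑ j, ∑ j', inner ℝ (Z j g) (Z j' g) := fun g => by
    rw [← real_inner_self_eq_norm_sq, sum_inner]
    simp only [inner_sum]
  simp only [hexpand]
  rw [sum_comm]
  refine sum_congr rfl fun j _ => ?_
  rw [sum_comm, sum_eq_single j]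
  · simp only [real_inner_self_eq_norm_sq]
  · intro j' _ hne
    rcases hZc j j' hne.symm with h | h
    · exact sum_inner_eq_zero_of_isCenteredAt h (hZ j')
    · simpa only [real_inner_comm] using sum_inner_eq_zero_of_isCenteredAt h (hZ j)
  · simp

theorem sum_norm_sq_sampleDev_le [Nonempty β] {k : κ} {w : β → (κ → β) → E}
    (hw : ∀ a, DependsOn (w a) {k}ᶜ) :
    ∑ g, ‖sampleDev k w g‖ ^ 2 ≤ ∑ g, (Fintype.card β : ℝ)⁻¹ * ∑ a, ‖w a g‖ ^ 2 := by
  have hN : (0 : ℝ) < Fintype.card β := Nat.cast_pos.mpr Fintype.card_pos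
  refine le_of_mul_le_mul_left ?_ hN
  rw [← nsmul_eq_mul, ← sum_sum_update_eq_card_smul k, mul_sum]
  refine sum_le_sum fun g _ => ?_
  rw [← mul_assoc, mul_inv_cancel₀ hN.ne', one_mul]
  simpa only [sampleDev, update_self, fun a => (hw a).apply_update_eq g] using
    sum_norm_sub_mean_sq_le (w · g)

end UniformCoordinates

section SarahEstimator

variable {κ β E : Type*} [Fintype β] [NormedAddCommGroup E] [InnerProductSpace ℝ E]

theorem sarah_sub_mean_eq_smul_sum_sampleDev {t B : ℕ} (hB : 0 < B) (G : β → E → E)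
    (k : Fin t → Fin B → κ) (X V : ℕ → (κ → β) → E)
    (hV₀ : ∀ g, V 0 g = (Fintype.card β : ℝ)⁻¹ • ∑ a, G a (X 0 g))
    (hV : ∀ (u : Fin t) g, V (u + 1) g =
      (B : ℝ)⁻¹ • ∑ l, (G (g (k u l)) (X (u + 1) g) - G (g (k u l)) (X u g)) + V u g)
    (g : κ → β) :
    V t g - (Fintype.card β : ℝ)⁻¹ • ∑ a, G a (X t g) = (B : ℝ)⁻¹ • ∑ p : Fin t × Fin B,
      sampleDev (k p.1 p.2) (fun a g => G a (X (p.1 + 1) g) - G a (X p.1 g)) g := by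
  set e : ℕ → E := fun u => V u g - (Fintype.card β : ℝ)⁻¹ • ∑ a, G a (X u g)
  have hstep : ∀ u : Fin t, e (u + 1) - e u = (B : ℝ)⁻¹ • ∑ l,
      sampleDev (k u l) (fun a g => G a (X (u + 1) g) - G a (X u g)) g := fun u => by
    have hB' : (B : ℝ) ≠ 0 := Nat.cast_ne_zero.mpr hB.ne'
    simp only [e, sampleDev, hV u g, sum_sub_distrib, sum_const, card_univ, Fintype.card_fin,
      smul_sub, ← Nat.cast_smul_eq_nsmul ℝ B, smul_smul, inv_mul_cancel_left₀ hB']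
    abel
  have htel := sum_range_sub e t
  rw [← Fin.sum_univ_eq_sum_range, sum_congr rfl fun u _ => hstep u] at htel
  calc _ = e t - e 0 := by simp [e, hV₀ g]
    _ = _ := by simp only [← htel, Fintype.sum_prod_type, smul_sum]

variable [Fintype κ] [DecidableEq κ] [Nonempty β]

/-- `g` collects the draws, `k u l` being the `l`-th draw of step `u + 1`; the iterate `X n` may
only depend on the draws of the steps before `n`. -/
theorem sum_norm_sq_sarah_sub_mean_le {t B : ℕ} (hB : 0 < B) (G : β → E → E) {L : ℝ}
    (hG : ∀ z w, (Fintype.card β : ℝ)⁻¹ * ∑ a, ‖G a z - G a w‖ ^ 2 ≤ L ^ 2 * ‖z - w‖ ^ 2)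
    (k : Fin t → Fin B → κ) (hk : Injective2 k) (X V : ℕ → (κ → β) → E)
    (hX : ∀ (n : ℕ) (u : Fin t) l, n ≤ (u : ℕ) + 1 → DependsOn (X n) {k u l}ᶜ)
    (hV₀ : ∀ g, V 0 g = (Fintype.card β : ℝ)⁻¹ • ∑ a, G a (X 0 g))
    (hV : ∀ (u : Fin t) g, V (u + 1) g =
      (B : ℝ)⁻¹ • ∑ l, (G (g (k u l)) (X (u + 1) g) - G (g (k u l)) (X u g)) + V u g) :
    ∑ g, ‖V t g - (Fintype.card β : ℝ)⁻¹ • ∑ a, G a (X t g)‖ ^ 2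
      ≤ L ^ 2 / B * ∑ u ∈ range t, ∑ g, ‖X (u + 1) g - X u g‖ ^ 2 := by
  set w : Fin t → β → (κ → β) → E := fun u a g => G a (X (u + 1) g) - G a (X u g)
  set Z : Fin t × Fin B → (κ → β) → E := fun p => sampleDev (k p.1 p.2) (w p.1)
  have hw : ∀ u u' l a, u ≤ u' → DependsOn (w u a) {k u' l}ᶜ := fun u u' l a hle g₁ g₂ h => by
    simp only [w, hX (u + 1) u' l (by omega) h, hX u u' l (by omega) h]
  -- the term of the later of two draws is centred in it, and the other term ignores it
  have horth : ∀ p p', p ≠ p' →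
      DependsOn (Z p) {k p'.1 p'.2}ᶜ ∨ DependsOn (Z p') {k p.1 p.2}ᶜ := by
    intro p p' hne
    have hne' : k p.1 p.2 ≠ k p'.1 p'.2 := fun he => hne (Prod.ext_iff.mpr (hk he))
    rcases le_total p.1 p'.1 with h | h
    · exact .inl (dependsOn_sampleDev (fun a => hw _ _ _ a h) hne')
    · exact .inr (dependsOn_sampleDev (fun a => hw _ _ _ a h) hne'.symm)
  have hvar : ∀ p : Fin t × Fin B,
      ∑ g, ‖Z p g‖ ^ 2 ≤ L ^ 2 * ∑ g, ‖X (p.1 + 1) g - X p.1 g‖ ^ 2 := fun p => by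
    refine (sum_norm_sq_sampleDev_le fun a => hw _ _ p.2 a le_rfl).trans ?_
    rw [mul_sum]
    exact sum_le_sum fun g _ => hG _ _
  calc ∑ g, ‖V t g - (Fintype.card β : ℝ)⁻¹ • ∑ a, G a (X t g)‖ ^ 2
      = (B : ℝ)⁻¹ ^ 2 * ∑ p, ∑ g, ‖Z p g‖ ^ 2 := by
        simp only [sarah_sub_mean_eq_smul_sum_sampleDev hB G k X V hV₀ hV, norm_smul, mul_pow,
          Real.norm_eq_abs, sq_abs, ← mul_sum]
        rw [sum_norm_sq_sum_eq_of_isCenteredAt (fun p => k p.1 p.2) Z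
          (fun p => isCenteredAt_sampleDev fun a => hw _ _ p.2 a le_rfl) horth]
    _ ≤ (B : ℝ)⁻¹ ^ 2 * ∑ p : Fin t × Fin B, L ^ 2 * ∑ g, ‖X (p.1 + 1) g - X p.1 g‖ ^ 2 := by
        gcongr with p; exact hvar p
    _ = L ^ 2 / B * ∑ u ∈ range t, ∑ g, ‖X (u + 1) g - X u g‖ ^ 2 := by
        rw [Fintype.sum_prod_type, ← Fin.sum_univ_eq_sum_range]
        simp only [sum_const, card_univ, Fintype.card_fin, nsmul_eq_mul, mul_sum]
        refine sum_congr rfl fun u _ => ?_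
        field_simp

end SarahEstimator

theorem norm_add₃_sq_le {E : Type*} [SeminormedAddCommGroup E] (a b c : E) :
    ‖a + b + c‖ ^ 2 ≤ 3 * (‖a‖ ^ 2 + ‖b‖ ^ 2 + ‖c‖ ^ 2) := by
  have h := norm_add₃_le (a := a) (b := b) (c := c)
  have : ‖a + b + c‖ ^ 2 ≤ (‖a‖ + ‖b‖ + ‖c‖) ^ 2 := by gcongr
  nlinarith [sq_nonneg (‖a‖ - ‖b‖), sq_nonneg (‖a‖ - ‖c‖), sq_nonneg (‖b‖ - ‖c‖)]

theorem sum_norm_sq_sub_le_consensus {ι E : Type*} [Fintype ι] [SeminormedAddCommGroup E]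
    [NormedSpace ℝ E] (a b : ι → E) :
    ∑ i, ‖a i - b i‖ ^ 2
      ≤ 3 * ∑ i, ‖a i - (Fintype.card ι : ℝ)⁻¹ • ∑ j, a j‖ ^ 2
        + 3 * ∑ i, ‖b i - (Fintype.card ι : ℝ)⁻¹ • ∑ j, b j‖ ^ 2
        + 3 * Fintype.card ι
          * ‖(Fintype.card ι : ℝ)⁻¹ • ∑ j, a j - (Fintype.card ι : ℝ)⁻¹ • ∑ j, b j‖ ^ 2 := by
  set ma := (Fintype.card ι : ℝ)⁻¹ • ∑ j, a j
  set mb := (Fintype.card ι : ℝ)⁻¹ • ∑ j, b j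
  calc ∑ i, ‖a i - b i‖ ^ 2 = ∑ i, ‖(a i - ma) + (mb - b i) + (ma - mb)‖ ^ 2 := by
        congr! 3; abel
    _ ≤ ∑ i, 3 * (‖a i - ma‖ ^ 2 + ‖b i - mb‖ ^ 2 + ‖ma - mb‖ ^ 2) := by
        gcongr with i
        simpa only [norm_sub_rev (mb)] using norm_add₃_sq_le (a i - ma) (mb - b i) (ma - mb)
    _ = _ := by
        simp only [← mul_sum, sum_add_distrib, sum_const, card_univ, nsmul_eq_mul]
        ring

theorem sum_sum_smul_eq_sum_of_sum_col_eq_one {ι E : Type*} [Fintype ι] [AddCommGroup E]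
    [Module ℝ E] {W : ι → ι → ℝ} (hW : ∀ r, ∑ i, W i r = 1) (z : ι → E) :
    ∑ i, ∑ r, W i r • z r = ∑ r, z r := by
  rw [sum_comm]
  exact sum_congr rfl fun r _ => by rw [← sum_smul, hW r, one_smul]

theorem gradient_const_mul_sum {F ι : Type*} [NormedAddCommGroup F] [InnerProductSpace ℝ F]
    [CompleteSpace F] [Fintype ι] (c : ℝ) {h : ι → F → ℝ} (hh : ∀ j, Differentiable ℝ (h j))
    (z : F) : gradient (fun z => c * ∑ j, h j z) z = c • ∑ j, gradient (h j) z := by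
  have hfd : fderiv ℝ (fun z => c * ∑ j, h j z) z = c • ∑ j, fderiv ℝ (h j) z := by
    rw [fderiv_const_mul (DifferentiableAt.fun_sum fun j _ => (hh j).differentiableAt) c,
      fderiv_fun_sum fun j _ => (hh j).differentiableAt]
  rw [gradient, hfd]
  simp only [gradient]
  rw [LinearIsometryEquiv.map_smul, map_sum]

section UniformLaw

open scoped ENNReal

variable {Ω : Type*} [MeasurableSpace Ω] {μ : Measure Ω}

theorem ProbabilityTheory.iIndepFun.measure_preimage_pi_singleton {ι κ β : Type*} [Fintype κ]
    [MeasurableSpace β] [MeasurableSingletonClass β] {X : ι → Ω → β} (hX : iIndepFun X μ)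
    {e : κ → ι} (he : Injective e) {c : ℝ≥0∞} (hc : ∀ k b, μ (X (e k) ⁻¹' {b}) = c) (g : κ → β) :
    μ ((fun ω k => X (e k) ω) ⁻¹' {g}) = c ^ Fintype.card κ := by
  have hpre : (fun ω k => X (e k) ω) ⁻¹' {g} = ⋂ k ∈ (univ : Finset κ), X (e k) ⁻¹' {g k} := by
    ext ω; simp [funext_iff]
  rw [hpre, (hX.precomp he).measure_inter_preimage_eq_mul univ
    fun k _ => measurableSet_singleton (g k)]
  simp [hc]

theorem integral_comp_eq_toReal_mul_sum [IsFiniteMeasure μ] {α : Type*} [Fintype α]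
    [MeasurableSpace α] [MeasurableSingletonClass α] {T : Ω → α} (hT : Measurable T)
    {c : ℝ≥0∞} (hc : ∀ a, μ (T ⁻¹' {a}) = c) (h : α → ℝ) :
    ∫ ω, h (T ω) ∂μ = c.toReal * ∑ a, h a := by
  rw [← integral_map hT.aemeasurable (measurable_of_finite h).aestronglyMeasurable,
    integral_fintype (.of_finite), mul_sum]
  simp [Measure.real, Measure.map_apply hT (measurableSet_singleton _), hc]

theorem integral_eq_toReal_mul_sum_comp [IsFiniteMeasure μ] {α : Type*} [Fintype α]
    [MeasurableSpace α] [MeasurableSingletonClass α] {T : Ω → α} (hT : Measurable T)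
    {c : ℝ≥0∞} (hc : ∀ a, μ (T ⁻¹' {a}) = c) {D : α → Ω} (h : Ω → ℝ)
    (hh : ∀ ω, h (D (T ω)) = h ω) : ∫ ω, h ω ∂μ = c.toReal * ∑ a, h (D a) := by
  simpa only [comp_apply, hh] using integral_comp_eq_toReal_mul_sum hT hc (h ∘ D)

end UniformLaw

section GTSarah

variable {Ω E : Type*} [NormedAddCommGroup E] [InnerProductSpace ℝ E] {n m q B : ℕ}

/-- The GT-SARAH recursions, with `G i j` and `H i` in the roles of `∇f_{i,j}` and `∇f_i`. -/
structure IsGTSarahRun (W : Matrix (Fin n) (Fin n) ℝ) (α : ℝ) (q B : ℕ)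
    (G : Fin n → Fin m → E → E) (H : Fin n → E → E) (τ : ℕ → ℕ → Fin n → Fin B → Ω → Fin m)
    (x y : ℕ → ℕ → Fin n → Ω → E) (v : ℤ → ℕ → Fin n → Ω → E) : Prop where
  x_init : ∀ i ω ω', x 0 1 i ω = x 0 1 i ω'
  y_init : ∀ i ω, y 0 1 i ω = 0
  v_init : ∀ i ω, v (-1) 1 i ω = 0
  v_zero : ∀ s, 1 ≤ s → ∀ i ω, v 0 s i ω = H i (x 0 s i ω)
  v_succ : ∀ s, 1 ≤ s → ∀ t : ℕ, 1 ≤ t → t ≤ q → ∀ i ω,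
    v (t : ℤ) s i ω = (B : ℝ)⁻¹ • (∑ l, (G i (τ t s i l ω) (x t s i ω)
      - G i (τ t s i l ω) (x (t - 1) s i ω))) + v ((t : ℤ) - 1) s i ω
  y_succ : ∀ s, 1 ≤ s → ∀ t : ℕ, t ≤ q → ∀ i ω,
    y (t + 1) s i ω = (∑ r, W i r • y t s r ω) + v (t : ℤ) s i ω - v ((t : ℤ) - 1) s i ω
  x_succ : ∀ s, 1 ≤ s → ∀ t : ℕ, t ≤ q → ∀ i ω,
    x (t + 1) s i ω = (∑ r, W i r • x t s r ω) - α • y (t + 1) s i ω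
  x_carry : ∀ s, 1 ≤ s → ∀ i ω, x 0 (s + 1) i ω = x (q + 1) s i ω
  y_carry : ∀ s, 1 ≤ s → ∀ i ω, y 0 (s + 1) i ω = y (q + 1) s i ω
  v_carry : ∀ s, 1 ≤ s → ∀ i ω, v (-1) (s + 1) i ω = v (q : ℤ) s i ω

def drawsUpTo (τ : ℕ → ℕ → Fin n → Fin B → Ω → Fin m) (q s : ℕ) (ω : Ω) :
    Fin q × Fin s × Fin n × Fin B → Fin m :=
  fun c => τ (c.1 + 1) (c.2.1 + 1) c.2.2.1 c.2.2.2 ω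

variable {W : Matrix (Fin n) (Fin n) ℝ} {α : ℝ} {G : Fin n → Fin m → E → E}
  {H : Fin n → E → E} {τ : ℕ → ℕ → Fin n → Fin B → Ω → Fin m} {x y : ℕ → ℕ → Fin n → Ω → E}
  {v : ℤ → ℕ → Fin n → Ω → E}

namespace IsGTSarahRun

theorem sum_y_succ (run : IsGTSarahRun W α q B G H τ x y v) (hW : ∀ r, ∑ i, W i r = 1)
    {s t : ℕ} (hs : 1 ≤ s) (ht : t ≤ q) (ω : Ω) :
    ∑ i, y (t + 1) s i ω = ∑ i, y t s i ω + ∑ i, v t s i ω - ∑ i, v ((t : ℤ) - 1) s i ω := by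
  simp only [run.y_succ s hs t ht, sum_sub_distrib, sum_add_distrib,
    sum_sum_smul_eq_sum_of_sum_col_eq_one hW]

theorem sum_y_eq_sum_v_of_zero (run : IsGTSarahRun W α q B G H τ x y v)
    (hW : ∀ r, ∑ i, W i r = 1) {s : ℕ} (hs : 1 ≤ s) {ω : Ω}
    (h0 : ∑ i, y 0 s i ω = ∑ i, v (-1) s i ω) {t : ℕ} (ht : t ≤ q + 1) :
    ∑ i, y t s i ω = ∑ i, v ((t : ℤ) - 1) s i ω := by
  induction t with
  | zero => simpa using h0
  | succ t ih =>
    rw [run.sum_y_succ hW hs (by omega), ih (by omega)]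
    simp

theorem sum_y_eq_sum_v (run : IsGTSarahRun W α q B G H τ x y v) (hW : ∀ r, ∑ i, W i r = 1)
    {s : ℕ} (hs : 1 ≤ s) {t : ℕ} (ht : t ≤ q + 1) (ω : Ω) :
    ∑ i, y t s i ω = ∑ i, v ((t : ℤ) - 1) s i ω := by
  refine run.sum_y_eq_sum_v_of_zero hW hs ?_ ht
  induction s, hs using Nat.le_induction with
  | base => simp [run.y_init, run.v_init]
  | succ s hs ih =>
    simpa [run.y_carry s hs, run.v_carry s hs] using run.sum_y_eq_sum_v_of_zero hW hs ih le_rfl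

theorem sum_x_succ (run : IsGTSarahRun W α q B G H τ x y v) (hW : ∀ r, ∑ i, W i r = 1)
    {s t : ℕ} (hs : 1 ≤ s) (ht : t ≤ q) (ω : Ω) :
    ∑ i, x (t + 1) s i ω = ∑ i, x t s i ω - α • ∑ i, v t s i ω := by
  simp only [run.x_succ s hs t ht, sum_sub_distrib, sum_sum_smul_eq_sum_of_sum_col_eq_one hW,
    ← smul_sum, run.sum_y_eq_sum_v hW hs (by omega : t + 1 ≤ q + 1)]
  simp

theorem state_eq_of_draws_eq (run : IsGTSarahRun W α q B G H τ x y v) {s b : ℕ} (hs : 1 ≤ s)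
    (hb : b ≤ q) {ω₁ ω₂ : Ω}
    (h0 : ∀ i, x 0 s i ω₁ = x 0 s i ω₂ ∧ y 0 s i ω₁ = y 0 s i ω₂ ∧ v (-1) s i ω₁ = v (-1) s i ω₂)
    (hτ : ∀ t, 1 ≤ t → t ≤ b → ∀ i l, τ t s i l ω₁ = τ t s i l ω₂) {t : ℕ} (ht : t ≤ b + 1) :
    ∀ i, x t s i ω₁ = x t s i ω₂ ∧ y t s i ω₁ = y t s i ω₂
      ∧ v ((t : ℤ) - 1) s i ω₁ = v ((t : ℤ) - 1) s i ω₂ := by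
  induction t using Nat.strong_induction_on with
  | _ t ih =>
  rcases t with _ | t
  · simpa using h0
  have hx : ∀ u ≤ t, ∀ i, x u s i ω₁ = x u s i ω₂ := fun u hu i =>
    (ih u (by omega) (by omega) i).1
  have hv : ∀ i, v t s i ω₁ = v t s i ω₂ := by
    intro i
    rcases Nat.eq_zero_or_pos t with rfl | ht0
    · simp only [Nat.cast_zero, run.v_zero s hs, hx 0 le_rfl]
    · simp only [run.v_succ s hs t ht0 (by omega), hτ t ht0 (by omega), hx t le_rfl,
        hx (t - 1) (by omega), (ih t (by omega) (by omega) i).2.2]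
  have hy : ∀ i, y (t + 1) s i ω₁ = y (t + 1) s i ω₂ := by
    intro i
    simp only [run.y_succ s hs t (by omega), hv, fun i => (ih t (by omega) (by omega) i).2.1,
      (ih t (by omega) (by omega) i).2.2]
  intro i
  refine ⟨?_, hy i, by simpa using hv i⟩
  simp only [run.x_succ s hs t (by omega), hy, hx t le_rfl]

theorem state_eq_of_drawsUpTo_eq (run : IsGTSarahRun W α q B G H τ x y v) {s b : ℕ} (hs : 1 ≤ s)
    (hb : b ≤ q) {ω₁ ω₂ : Ω}
    (hτ : ∀ c : Fin q × Fin s × Fin n × Fin B, (c.2.1 : ℕ) + 1 < s ∨ (c.1 : ℕ) < b →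
      drawsUpTo τ q s ω₁ c = drawsUpTo τ q s ω₂ c) {t : ℕ} (ht : t ≤ b + 1) :
    ∀ i, x t s i ω₁ = x t s i ω₂ ∧ y t s i ω₁ = y t s i ω₂
      ∧ v ((t : ℤ) - 1) s i ω₁ = v ((t : ℤ) - 1) s i ω₂ := by
  have hdraw : ∀ s' t, 1 ≤ s' → s' ≤ s → 1 ≤ t → t ≤ q → s' < s ∨ t ≤ b →
      ∀ i l, τ t s' i l ω₁ = τ t s' i l ω₂ := by
    intro s' t hs' hs's ht htq hlt i l
    have h := hτ (⟨t - 1, by omega⟩, ⟨s' - 1, by omega⟩, i, l) (by simp only; omega)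
    simpa only [drawsUpTo, Nat.sub_add_cancel ht, Nat.sub_add_cancel hs'] using h
  have hstart : ∀ s', 1 ≤ s' → s' ≤ s → ∀ i, x 0 s' i ω₁ = x 0 s' i ω₂
      ∧ y 0 s' i ω₁ = y 0 s' i ω₂ ∧ v (-1) s' i ω₁ = v (-1) s' i ω₂ := by
    intro s' hs'
    induction s', hs' using Nat.le_induction with
    | base => exact fun _ i => ⟨run.x_init i ω₁ ω₂, by simp [run.y_init, run.v_init]⟩
    | succ s' hs' ih =>
      intro hs's i
      have h := run.state_eq_of_draws_eq hs' le_rfl (ih (by omega))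
        (fun t ht htq => hdraw s' t hs' (by omega) ht htq (.inl (by omega))) le_rfl i
      simpa [run.x_carry s' hs', run.y_carry s' hs', run.v_carry s' hs'] using h
  exact run.state_eq_of_draws_eq hs hb (hstart s hs le_rfl)
    (fun t ht htb => hdraw s t hs le_rfl ht (htb.trans hb) (.inr htb)) ht

variable {s : ℕ}

theorem eq_of_drawsUpTo_eq (run : IsGTSarahRun W α q B G H τ x y v) (hs : 1 ≤ s) {ω₁ ω₂ : Ω}
    (h : drawsUpTo τ q s ω₁ = drawsUpTo τ q s ω₂) :
    (∀ u ≤ q + 1, ∀ i, x u s i ω₁ = x u s i ω₂) ∧ (∀ u ≤ q, ∀ i, v u s i ω₁ = v u s i ω₂) :=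
  have hstate := fun {t} ht => run.state_eq_of_drawsUpTo_eq hs le_rfl (fun c _ => congrFun h c)
    (t := t) ht
  ⟨fun u hu i => (hstate hu i).1,
    fun u hu i => by simpa using (hstate (t := u + 1) (by omega) i).2.2⟩

variable {D : (Fin q × Fin s × Fin n × Fin B → Fin m) → Ω}

theorem dependsOn_x_comp (run : IsGTSarahRun W α q B G H τ x y v) (hs : 1 ≤ s)
    (hD : ∀ g, drawsUpTo τ q s (D g) = g) {t : ℕ} {c : Fin q × Fin s × Fin n × Fin B}
    (hc : (c.2.1 : ℕ) + 1 = s) (ht : t ≤ c.1 + 1) (i : Fin n) :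
    DependsOn (fun g => x t s i (D g)) {c}ᶜ := fun g₁ g₂ h =>
  (run.state_eq_of_drawsUpTo_eq hs (b := t - 1) (by omega)
    (fun c' hc' => by rw [hD, hD]; exact h c' (by rintro rfl; omega)) (by omega) i).1

theorem sum_norm_sq_v_sub_grad_le (run : IsGTSarahRun W α q B G H τ x y v)
    (hH : ∀ i z, H i z = (m : ℝ)⁻¹ • ∑ j, G i j z) {L : ℝ}
    (hG : ∀ i z w, (m : ℝ)⁻¹ * ∑ j, ‖G i j z - G i j w‖ ^ 2 ≤ L ^ 2 * ‖z - w‖ ^ 2)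
    (hm : 1 ≤ m) (hB : 1 ≤ B) (hs : 1 ≤ s) {t : ℕ} (htq : t ≤ q)
    (hD : ∀ g, drawsUpTo τ q s (D g) = g) (i : Fin n) :
    ∑ g, ‖v t s i (D g) - H i (x t s i (D g))‖ ^ 2
      ≤ L ^ 2 / B * ∑ u ∈ range t, ∑ g, ‖x (u + 1) s i (D g) - x u s i (D g)‖ ^ 2 := by
  have : Nonempty (Fin m) := ⟨⟨0, hm⟩⟩
  let k : Fin t → Fin B → Fin q × Fin s × Fin n × Fin B :=
    fun u l => (Fin.castLE htq u, ⟨s - 1, by omega⟩, i, l)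
  have hk : Injective2 k := fun u u' l l' h => by
    simp only [k, Prod.mk.injEq, Fin.castLE_inj] at h
    exact ⟨h.1, h.2.2.2⟩
  have hτ : ∀ (u : Fin t) l g, τ (u + 1) s i l (D g) = g (k u l) := fun u l g => by
    simpa only [drawsUpTo, k, Fin.val_castLE, Nat.sub_add_cancel hs] using congrFun (hD g) (k u l)
  have h := sum_norm_sq_sarah_sub_mean_le hB (G i) (by simpa only [Fintype.card_fin] using hG i)
    k hk (fun u g => x u s i (D g)) (fun u g => v u s i (D g))
    (fun _ u l h => run.dependsOn_x_comp hs hD (c := k u l) (Nat.sub_add_cancel hs) h i)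
    (fun g => by simpa only [Nat.cast_zero, Fintype.card_fin, hH] using run.v_zero s hs i (D g))
    (fun u g => by
      simpa [hτ] using run.v_succ s hs (u + 1) (by omega) (by omega) i (D g))
  simpa only [Fintype.card_fin, hH] using h

theorem sum_sum_norm_sq_v_sub_grad_le (run : IsGTSarahRun W α q B G H τ x y v)
    (hW : ∀ r, ∑ i, W i r = 1) (hH : ∀ i z, H i z = (m : ℝ)⁻¹ • ∑ j, G i j z) {L : ℝ}
    (hG : ∀ i z w, (m : ℝ)⁻¹ * ∑ j, ‖G i j z - G i j w‖ ^ 2 ≤ L ^ 2 * ‖z - w‖ ^ 2)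
    (hm : 1 ≤ m) (hB : 1 ≤ B) (hs : 1 ≤ s) {t : ℕ} (htq : t ≤ q)
    (hD : ∀ g, drawsUpTo τ q s (D g) = g) :
    ∑ g, ∑ i, ‖v t s i (D g) - H i (x t s i (D g))‖ ^ 2
      ≤ (3 * n * α ^ 2 * L ^ 2 / B) * ∑ u ∈ range t, ∑ g, ‖(n : ℝ)⁻¹ • ∑ i, v u s i (D g)‖ ^ 2
        + (6 * L ^ 2 / B) * ∑ u ∈ range (t + 1),
          ∑ g, ∑ i, ‖x u s i (D g) - (n : ℝ)⁻¹ • ∑ i', x u s i' (D g)‖ ^ 2 := by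
  set A : ℕ → ℝ := fun u => ∑ g, ∑ i, ‖x u s i (D g) - (n : ℝ)⁻¹ • ∑ i', x u s i' (D g)‖ ^ 2
  set V : ℕ → ℝ := fun u => ∑ g, ‖(n : ℝ)⁻¹ • ∑ i, v u s i (D g)‖ ^ 2
  have hstep : ∀ u ∈ range t, ∑ g, ∑ i, ‖x (u + 1) s i (D g) - x u s i (D g)‖ ^ 2
      ≤ 3 * A (u + 1) + 3 * A u + 3 * n * α ^ 2 * V u := by
    intro u hu
    have hmean : ∀ g, (n : ℝ)⁻¹ • ∑ i, x (u + 1) s i (D g) - (n : ℝ)⁻¹ • ∑ i, x u s i (D g)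
        = -(α • (n : ℝ)⁻¹ • ∑ i, v u s i (D g)) := fun g => by
      rw [run.sum_x_succ hW hs (by simp at hu; omega)]
      module
    have hg : ∀ g, ∑ i, ‖x (u + 1) s i (D g) - x u s i (D g)‖ ^ 2
        ≤ 3 * ∑ i, ‖x (u + 1) s i (D g) - (n : ℝ)⁻¹ • ∑ i', x (u + 1) s i' (D g)‖ ^ 2
          + 3 * ∑ i, ‖x u s i (D g) - (n : ℝ)⁻¹ • ∑ i', x u s i' (D g)‖ ^ 2
          + 3 * n * α ^ 2 * ‖(n : ℝ)⁻¹ • ∑ i, v u s i (D g)‖ ^ 2 := fun g => by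
      have h := sum_norm_sq_sub_le_consensus (fun i => x (u + 1) s i (D g))
        (fun i => x u s i (D g))
      rw [Fintype.card_fin, hmean, norm_neg, norm_smul, Real.norm_eq_abs, mul_pow, sq_abs] at h
      linarith
    refine (sum_le_sum fun g _ => hg g).trans_eq ?_
    simp only [A, V, sum_add_distrib, mul_sum]
  have hA : ∀ u, 0 ≤ A u := fun u => by positivity
  have hA₁ : ∑ u ∈ range t, A (u + 1) ≤ ∑ u ∈ range (t + 1), A u := by
    rw [sum_range_succ' A]; linarith [hA 0]
  have hA₀ : ∑ u ∈ range t, A u ≤ ∑ u ∈ range (t + 1), A u := by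
    rw [sum_range_succ A]; linarith [hA t]
  calc _ = ∑ i, ∑ g, ‖v t s i (D g) - H i (x t s i (D g))‖ ^ 2 := sum_comm
    _ ≤ ∑ i, L ^ 2 / B * ∑ u ∈ range t, ∑ g, ‖x (u + 1) s i (D g) - x u s i (D g)‖ ^ 2 :=
        sum_le_sum fun i _ => run.sum_norm_sq_v_sub_grad_le hH hG hm hB hs htq hD i
    _ = L ^ 2 / B * ∑ u ∈ range t, ∑ g, ∑ i, ‖x (u + 1) s i (D g) - x u s i (D g)‖ ^ 2 := by
        rw [← mul_sum, sum_comm]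
        simp only [sum_comm (s := (univ : Finset (Fin n)))]
    _ ≤ L ^ 2 / B * ∑ u ∈ range t, (3 * A (u + 1) + 3 * A u + 3 * n * α ^ 2 * V u) := by
        gcongr with u hu; exact hstep u hu
    _ = L ^ 2 / B * (3 * ∑ u ∈ range t, A (u + 1) + 3 * ∑ u ∈ range t, A u)
          + (3 * n * α ^ 2 * L ^ 2 / B) * ∑ u ∈ range t, V u := by
        simp only [sum_add_distrib, ← mul_sum]
        ring
    _ ≤ L ^ 2 / B * (3 * ∑ u ∈ range (t + 1), A u + 3 * ∑ u ∈ range (t + 1), A u)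
          + (3 * n * α ^ 2 * L ^ 2 / B) * ∑ u ∈ range t, V u := by
        gcongr
    _ = _ := by ring

open scoped ENNReal in
theorem integral_sum_norm_sq_v_sub_grad_le [MeasurableSpace Ω] {μ : Measure Ω} [IsFiniteMeasure μ]
    (run : IsGTSarahRun W α q B G H τ x y v) (hW : ∀ r, ∑ i, W i r = 1)
    (hH : ∀ i z, H i z = (m : ℝ)⁻¹ • ∑ j, G i j z) {L : ℝ}
    (hG : ∀ i z w, (m : ℝ)⁻¹ * ∑ j, ‖G i j z - G i j w‖ ^ 2 ≤ L ^ 2 * ‖z - w‖ ^ 2)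
    (hm : 1 ≤ m) (hB : 1 ≤ B) (hτ : ∀ t s i l, Measurable (τ t s i l)) (hs : 1 ≤ s)
    {c : ℝ≥0∞} (hc : c ≠ 0) (hunif : ∀ g, μ (drawsUpTo τ q s ⁻¹' {g}) = c) {t : ℕ} (htq : t ≤ q) :
    ∫ ω, ∑ i, ‖v t s i ω - H i (x t s i ω)‖ ^ 2 ∂μ
      ≤ (3 * n * α ^ 2 * L ^ 2 / B) * ∑ u ∈ range t, ∫ ω, ‖(n : ℝ)⁻¹ • ∑ i, v u s i ω‖ ^ 2 ∂μ
        + (6 * L ^ 2 / B) * ∑ u ∈ range (t + 1),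
          ∫ ω, ∑ i, ‖x u s i ω - (n : ℝ)⁻¹ • ∑ i', x u s i' ω‖ ^ 2 ∂μ := by
  set T := drawsUpTo τ q s
  have hT : Measurable T := measurable_pi_lambda _ fun c => hτ _ _ _ _
  have hsurj : Surjective T := fun g => nonempty_of_measure_ne_zero ((hunif g).trans_ne hc)
  set D := surjInv hsurj
  have hD : ∀ g, T (D g) = g := surjInv_eq hsurj
  have hx ω := (run.eq_of_drawsUpTo_eq hs (hD (T ω))).1
  have hv ω := (run.eq_of_drawsUpTo_eq hs (hD (T ω))).2
  have hint := integral_eq_toReal_mul_sum_comp hT hunif (D := D)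
  rw [hint (fun ω => ∑ i, ‖v t s i ω - H i (x t s i ω)‖ ^ 2)
      fun ω => by simp only [hx ω t (by omega), hv ω t htq],
    sum_congr rfl fun (u : ℕ) hu => hint (fun ω => ‖(n : ℝ)⁻¹ • ∑ i, v u s i ω‖ ^ 2)
      fun ω => by simp only [hv ω u (by simp at hu; omega)],
    sum_congr rfl fun (u : ℕ) hu =>
      hint (fun ω => ∑ i, ‖x u s i ω - (n : ℝ)⁻¹ • ∑ i', x u s i' ω‖ ^ 2)
      fun ω => by simp only [hx ω u (by simp at hu; omega)],
    ← mul_sum, ← mul_sum]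
  calc _ ≤ c.toReal * ((3 * n * α ^ 2 * L ^ 2 / B)
          * ∑ u ∈ range t, ∑ g, ‖(n : ℝ)⁻¹ • ∑ i, v u s i (D g)‖ ^ 2
        + (6 * L ^ 2 / B) * ∑ u ∈ range (t + 1),
          ∑ g, ∑ i, ‖x u s i (D g) - (n : ℝ)⁻¹ • ∑ i', x u s i' (D g)‖ ^ 2) :=
      mul_le_mul_of_nonneg_left (run.sum_sum_norm_sq_v_sub_grad_le hW hH hG hm hB hs htq hD)
        ENNReal.toReal_nonneg
    _ = _ := by ring

end IsGTSarahRun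

end GTSarah

theorem gt_sarah_local_vr_general
    {Ω : Type*} [MeasurableSpace Ω] (μ : Measure Ω) [IsProbabilityMeasure μ]
    (n m p q B : ℕ) (hm : 1 ≤ m)
    (hB1 : 1 ≤ B)
    (α L : ℝ)
    (f : Fin n → Fin m → EuclideanSpace ℝ (Fin p) → ℝ)
    (hdiff : ∀ i j, Differentiable ℝ (f i j))
    (hsmooth : ∀ i (u w : EuclideanSpace ℝ (Fin p)),
      (m : ℝ)⁻¹ * ∑ j, ‖gradient (f i j) u - gradient (f i j) w‖ ^ 2 ≤ L ^ 2 * ‖u - w‖ ^ 2)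
    (fI : Fin n → EuclideanSpace ℝ (Fin p) → ℝ)
    (hfI : ∀ i, fI i = fun z => (m : ℝ)⁻¹ * ∑ j, f i j z)
    (W : Matrix (Fin n) (Fin n) ℝ)
    (hWcol : ∀ r, ∑ i, W i r = 1)
    (τ : ℕ → ℕ → Fin n → Fin B → Ω → Fin m)
    (hτmeas : ∀ t s i l, Measurable (τ t s i l))
    (hτindep : ProbabilityTheory.iIndepFun
      (fun idx : {u : ℕ × ℕ // 1 ≤ u.1 ∧ u.1 ≤ q ∧ 1 ≤ u.2} × Fin n × Fin B => τ idx.1.1.1 idx.1.1.2 idx.2.1 idx.2.2) μ)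
    (hτunif : ∀ t s (i : Fin n) (l : Fin B), 1 ≤ t → t ≤ q → 1 ≤ s → ∀ j : Fin m,
      μ (τ t s i l ⁻¹' {j}) = 1 / (m : ENNReal))
    (x y : ℕ → ℕ → Fin n → Ω → EuclideanSpace ℝ (Fin p))
    (v : ℤ → ℕ → Fin n → Ω → EuclideanSpace ℝ (Fin p))
    (x0 : EuclideanSpace ℝ (Fin p))
    (hx0 : ∀ i ω, x 0 1 i ω = x0)
    (hy0 : ∀ i ω, y 0 1 i ω = 0)
    (hvm1 : ∀ i ω, v (-1) 1 i ω = 0)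
    (hv0 : ∀ s, 1 ≤ s → ∀ i ω, v 0 s i ω = gradient (fI i) (x 0 s i ω))
    (hvrec : ∀ s, 1 ≤ s → ∀ t : ℕ, 1 ≤ t → t ≤ q → ∀ i ω,
      v (t : ℤ) s i ω = (B : ℝ)⁻¹ • (∑ l, (gradient (f i (τ t s i l ω)) (x t s i ω)
        - gradient (f i (τ t s i l ω)) (x (t - 1) s i ω))) + v ((t : ℤ) - 1) s i ω)
    (hyrec : ∀ s, 1 ≤ s → ∀ t : ℕ, t ≤ q → ∀ i ω,
      y (t + 1) s i ω = (∑ r, W i r • y t s r ω) + v (t : ℤ) s i ω - v ((t : ℤ) - 1) s i ω)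
    (hxrec : ∀ s, 1 ≤ s → ∀ t : ℕ, t ≤ q → ∀ i ω,
      x (t + 1) s i ω = (∑ r, W i r • x t s r ω) - α • y (t + 1) s i ω)
    (hxcarry : ∀ s, 1 ≤ s → ∀ i ω, x 0 (s + 1) i ω = x (q + 1) s i ω)
    (hycarry : ∀ s, 1 ≤ s → ∀ i ω, y 0 (s + 1) i ω = y (q + 1) s i ω)
    (hvcarry : ∀ s, 1 ≤ s → ∀ i ω, v (-1) (s + 1) i ω = v (q : ℤ) s i ω)
    :
    ∀ s : ℕ, 1 ≤ s → ∀ t : ℕ, 1 ≤ t → t ≤ q →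
      ∫ ω, ∑ i, ‖v (t : ℤ) s i ω - gradient (fI i) (x t s i ω)‖ ^ 2 ∂μ
        ≤ (3 * (n : ℝ) * α ^ 2 * L ^ 2 / B) *
            ∑ u ∈ range t, ∫ ω, ‖(n : ℝ)⁻¹ • ∑ i, v (u : ℤ) s i ω‖ ^ 2 ∂μ
          + (6 * L ^ 2 / B) * ∑ u ∈ range (t + 1),
              ∫ ω, ∑ i, ‖x u s i ω - (n : ℝ)⁻¹ • ∑ i', x u s i' ω‖ ^ 2 ∂μ := by
  intro s hs t _ htq
  have run :
      IsGTSarahRun W α q B (fun i j => gradient (f i j)) (fun i => gradient (fI i)) τ x y v :=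
    { x_init := fun i ω ω' => (hx0 i ω).trans (hx0 i ω').symm
      y_init := hy0, v_init := hvm1, v_zero := hv0, v_succ := hvrec, y_succ := hyrec,
      x_succ := hxrec, x_carry := hxcarry, y_carry := hycarry, v_carry := hvcarry }
  have hH : ∀ i z, gradient (fI i) z = (m : ℝ)⁻¹ • ∑ j, gradient (f i j) z := fun i z => by
    rw [hfI i]; exact gradient_const_mul_sum _ (hdiff i) z
  let e : Fin q × Fin s × Fin n × Fin B →
      {u : ℕ × ℕ // 1 ≤ u.1 ∧ u.1 ≤ q ∧ 1 ≤ u.2} × Fin n × Fin B :=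
    fun c => (⟨(c.1 + 1, c.2.1 + 1), by omega, c.1.isLt, by omega⟩, c.2.2.1, c.2.2.2)
  have he : Injective e := fun c c' h => by
    simp only [e, Prod.mk.injEq, Subtype.mk.injEq, add_left_inj, Fin.val_inj] at h
    exact Prod.ext h.1.1 (Prod.ext h.1.2 (Prod.ext h.2.1 h.2.2))
  have hunif := hτindep.measure_preimage_pi_singleton he
    fun c j => hτunif (c.1 + 1) (c.2.1 + 1) c.2.2.1 c.2.2.2 (by omega) c.1.isLt (by omega) j
  exact run.integral_sum_norm_sq_v_sub_grad_le hWcol hH hsmooth hm hB1 hτmeas hs (by simp) hunif htq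

/-- GT-SARAH setup. -/
theorem gt_sarah_local_vr
    {Ω : Type*} [MeasurableSpace Ω] (μ : Measure Ω) [IsProbabilityMeasure μ]
    (n m p q B : ℕ) (hn : 1 ≤ n) (hm : 1 ≤ m) (hp : 1 ≤ p) (hq : 1 ≤ q)
    (hB1 : 1 ≤ B) (hBm : B ≤ m)
    (α L : ℝ) (hα0 : 0 < α) (hL : 0 < L)
    (f : Fin n → Fin m → EuclideanSpace ℝ (Fin p) → ℝ)
    (hdiff : ∀ i j, Differentiable ℝ (f i j))
    (hsmooth : ∀ i (u w : EuclideanSpace ℝ (Fin p)),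
      (m : ℝ)⁻¹ * ∑ j, ‖gradient (f i j) u - gradient (f i j) w‖ ^ 2 ≤ L ^ 2 * ‖u - w‖ ^ 2)
    (fI : Fin n → EuclideanSpace ℝ (Fin p) → ℝ)
    (hfI : ∀ i, fI i = fun z => (m : ℝ)⁻¹ * ∑ j, f i j z)
    (F : EuclideanSpace ℝ (Fin p) → ℝ)
    (hF : F = fun z => (n : ℝ)⁻¹ * ∑ i, fI i z)
    (Fstar : ℝ) (hFbdd : BddBelow (Set.range F)) (hFstar : Fstar = sInf (Set.range F))
    (W : Matrix (Fin n) (Fin n) ℝ)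
    (hWnonneg : ∀ i r, 0 ≤ W i r) (hWdiag : ∀ i, 0 < W i i)
    (hWprim : ∃ k : ℕ, 0 < k ∧ ∀ i r, 0 < (W ^ k) i r)
    (hWrow : ∀ i, ∑ r, W i r = 1) (hWcol : ∀ r, ∑ i, W i r = 1)
    (lam : ℝ)
    (hlam : lam = ‖(Matrix.toEuclideanCLM (𝕜 := ℝ) (W - Matrix.of fun _ _ => (n : ℝ)⁻¹) :
      EuclideanSpace ℝ (Fin n) →L[ℝ] EuclideanSpace ℝ (Fin n))‖)
    (hlam0 : 0 ≤ lam) (hlam1 : lam < 1)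
    (τ : ℕ → ℕ → Fin n → Fin B → Ω → Fin m)
    (hτmeas : ∀ t s i l, Measurable (τ t s i l))
    (hτindep : ProbabilityTheory.iIndepFun
      (fun idx : {u : ℕ × ℕ // 1 ≤ u.1 ∧ u.1 ≤ q ∧ 1 ≤ u.2} × Fin n × Fin B => τ idx.1.1.1 idx.1.1.2 idx.2.1 idx.2.2) μ)
    (hτunif : ∀ t s (i : Fin n) (l : Fin B), 1 ≤ t → t ≤ q → 1 ≤ s → ∀ j : Fin m,
      μ (τ t s i l ⁻¹' {j}) = 1 / (m : ENNReal))
    (x y : ℕ → ℕ → Fin n → Ω → EuclideanSpace ℝ (Fin p))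
    (v : ℤ → ℕ → Fin n → Ω → EuclideanSpace ℝ (Fin p))
    (x0 : EuclideanSpace ℝ (Fin p))
    (hx0 : ∀ i ω, x 0 1 i ω = x0)
    (hy0 : ∀ i ω, y 0 1 i ω = 0)
    (hvm1 : ∀ i ω, v (-1) 1 i ω = 0)
    (hv0 : ∀ s, 1 ≤ s → ∀ i ω, v 0 s i ω = gradient (fI i) (x 0 s i ω))
    (hvrec : ∀ s, 1 ≤ s → ∀ t : ℕ, 1 ≤ t → t ≤ q → ∀ i ω,
      v (t : ℤ) s i ω = (B : ℝ)⁻¹ • (∑ l, (gradient (f i (τ t s i l ω)) (x t s i ω)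
        - gradient (f i (τ t s i l ω)) (x (t - 1) s i ω))) + v ((t : ℤ) - 1) s i ω)
    (hyrec : ∀ s, 1 ≤ s → ∀ t : ℕ, t ≤ q → ∀ i ω,
      y (t + 1) s i ω = (∑ r, W i r • y t s r ω) + v (t : ℤ) s i ω - v ((t : ℤ) - 1) s i ω)
    (hxrec : ∀ s, 1 ≤ s → ∀ t : ℕ, t ≤ q → ∀ i ω,
      x (t + 1) s i ω = (∑ r, W i r • x t s r ω) - α • y (t + 1) s i ω)
    (hxcarry : ∀ s, 1 ≤ s → ∀ i ω, x 0 (s + 1) i ω = x (q + 1) s i ω)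
    (hycarry : ∀ s, 1 ≤ s → ∀ i ω, y 0 (s + 1) i ω = y (q + 1) s i ω)
    (hvcarry : ∀ s, 1 ≤ s → ∀ i ω, v (-1) (s + 1) i ω = v (q : ℤ) s i ω)
    :
    ∀ s : ℕ, 1 ≤ s → ∀ t : ℕ, 1 ≤ t → t ≤ q →
      ∫ ω, ∑ i, ‖v (t : ℤ) s i ω - gradient (fI i) (x t s i ω)‖ ^ 2 ∂μ
        ≤ (3 * (n : ℝ) * α ^ 2 * L ^ 2 / B) *
            ∑ u ∈ range t, ∫ ω, ‖(n : ℝ)⁻¹ • ∑ i, v (u : ℤ) s i ω‖ ^ 2 ∂μ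
          + (6 * L ^ 2 / B) * ∑ u ∈ range (t + 1),
              ∫ ω, ∑ i, ‖x u s i ω - (n : ℝ)⁻¹ • ∑ i', x u s i' ω‖ ^ 2 ∂μ :=
  gt_sarah_local_vr_general μ n m p q B hm hB1 α L f hdiff hsmooth fI hfI W hWcol τ hτmeas hτindep
    hτunif x y v x0 hx0 hy0 hvm1 hv0 hvrec hyrec hxrec hxcarry hycarry hvcarry
end

section
/- Let λ ∈ [0,1), L > 0, and 0 < α < (1−λ²)²/(8√5·L). Define the 2×2 matrix G := [[(1+λ²)/2, 2α²L²/(1−λ²)], [18/(1−λ²), (3+λ²)/4]]. Then the spectral radius satisfies ρ(G) < 1; consequently the series Σ_{k=0}^∞ G^k converges and equals (I₂ − G)⁻¹. -/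
/-!
With `s = 1 - λ²`, the entrywise nonnegative matrix `G` has the positive sub-eigenvector
`v = (s² / 76, 1)`: `G v ≤ (1 - s / 80) v`, where the step-size bound enters as `320 (αL)² < s⁴`.
A positive vector with `A v ≤ r v` bounds the modulus of every complex eigenvalue of a nonnegative
matrix `A` by `r` (compare an eigenvector with `v` at the coordinate maximising `|wᵢ| / vᵢ`), and
it bounds the entries of `A ^ k` by `r ^ k vᵢ / vⱼ`, so for `r < 1` the Neumann series converges.
-/

open Matrix

namespace Matrix

variable {n : Type*} [Fintype n] {A : Matrix n n ℝ} {v : n → ℝ} {r : ℝ}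

lemma mulVec_mono_of_nonneg (hA : ∀ i j, 0 ≤ A i j) {x y : n → ℝ} (hxy : x ≤ y) :
    A *ᵥ x ≤ A *ᵥ y :=
  fun i => dotProduct_le_dotProduct_of_nonneg_left hxy (hA i)

variable [DecidableEq n]

lemma pow_apply_nonneg_of_nonneg (hA : ∀ i j, 0 ≤ A i j) (k : ℕ) (i j : n) :
    0 ≤ (A ^ k) i j := by
  induction k generalizing i j with
  | zero => rw [pow_zero, one_apply]; split_ifs <;> norm_num
  | succ k ih =>
    rw [pow_succ, mul_apply]
    exact Finset.sum_nonneg fun l _ => mul_nonneg (ih i l) (hA l j)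

lemma pow_mulVec_le_of_mulVec_le (hA : ∀ i j, 0 ≤ A i j) (hr : 0 ≤ r) (hAv : A *ᵥ v ≤ r • v)
    (k : ℕ) : A ^ k *ᵥ v ≤ r ^ k • v := by
  induction k with
  | zero => simp
  | succ k ih =>
    calc A ^ (k + 1) *ᵥ v = A *ᵥ (A ^ k *ᵥ v) := by rw [pow_succ', mulVec_mulVec]
      _ ≤ A *ᵥ (r ^ k • v) := mulVec_mono_of_nonneg hA ih
      _ = r ^ k • (A *ᵥ v) := mulVec_smul A (r ^ k) v
      _ ≤ r ^ k • (r • v) := smul_le_smul_of_nonneg_left hAv (pow_nonneg hr k)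
      _ = r ^ (k + 1) • v := by rw [smul_smul, pow_succ]

lemma pow_apply_le_of_mulVec_le (hA : ∀ i j, 0 ≤ A i j) (hv : ∀ i, 0 < v i) (hr : 0 ≤ r)
    (hAv : A *ᵥ v ≤ r • v) (k : ℕ) (i j : n) : (A ^ k) i j ≤ r ^ k * v i / v j := by
  rw [le_div_iff₀ (hv j)]
  calc (A ^ k) i j * v j ≤ ∑ l, (A ^ k) i l * v l :=
        Finset.single_le_sum (fun l _ => mul_nonneg (pow_apply_nonneg_of_nonneg hA k i l)
          (hv l).le) (Finset.mem_univ j)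
    _ ≤ r ^ k * v i := pow_mulVec_le_of_mulVec_le hA hr hAv k i

lemma summable_pow_of_mulVec_le (hA : ∀ i j, 0 ≤ A i j) (hv : ∀ i, 0 < v i) (hr : 0 ≤ r)
    (hr1 : r < 1) (hAv : A *ᵥ v ≤ r • v) : Summable (A ^ ·) := by
  refine Pi.summable.2 fun i => Pi.summable.2 fun j => ?_
  exact .of_nonneg_of_le (fun k => pow_apply_nonneg_of_nonneg hA k i j)
    (fun k => pow_apply_le_of_mulVec_le hA hv hr hAv k i j)
    (((summable_geometric_of_lt_one hr hr1).mul_right (v i)).div_const (v j))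

lemma norm_le_of_mem_spectrum_of_mulVec_le (hA : ∀ i j, 0 ≤ A i j) (hv : ∀ i, 0 < v i)
    (hAv : A *ᵥ v ≤ r • v) {z : ℂ} (hz : z ∈ spectrum ℂ (A.map (algebraMap ℝ ℂ))) :
    ‖z‖ ≤ r := by
  rw [← spectrum_toLin', ← Module.End.hasEigenvalue_iff_mem_spectrum] at hz
  obtain ⟨w, hw⟩ := hz.exists_hasEigenvector
  have hAw : A.map (algebraMap ℝ ℂ) *ᵥ w = z • w := by simpa using hw.apply_eq_smul
  obtain ⟨j, hj⟩ := Function.ne_iff.1 hw.2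
  have : Nonempty n := ⟨j⟩
  obtain ⟨i, hi⟩ := Finite.exists_max fun l => ‖w l‖ / v l
  set m := ‖w i‖ / v i
  have hwi : 0 < ‖w i‖ := by
    have := (div_pos (norm_pos_iff.2 hj) (hv j)).trans_le (hi j)
    exact (div_pos_iff_of_pos_right (hv i)).1 this
  refine le_of_mul_le_mul_right ?_ hwi
  calc ‖z‖ * ‖w i‖ = ‖∑ l, (A i l : ℂ) * w l‖ := by
        rw [← norm_mul, ← smul_eq_mul, ← Pi.smul_apply, ← hAw]; rfl
    _ ≤ ∑ l, A i l * ‖w l‖ := by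
        refine (norm_sum_le _ _).trans_eq (Finset.sum_congr rfl fun l _ => ?_)
        rw [norm_mul, Complex.norm_real, Real.norm_of_nonneg (hA i l)]
    _ ≤ ∑ l, A i l * (m * v l) := by
        gcongr with l
        · exact hA i l
        · exact (div_le_iff₀ (hv l)).1 (hi l)
    _ = m * (A *ᵥ v) i := by
        simp only [mulVec, dotProduct, Finset.mul_sum]
        exact Finset.sum_congr rfl fun l _ => by ring
    _ ≤ m * (r * v i) := mul_le_mul_of_nonneg_left (hAv i) (div_nonneg (norm_nonneg _) (hv i).le)
    _ = r * ‖w i‖ := by simp only [m]; field_simp [(hv i).ne']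

end Matrix

lemma Summable.isUnit_one_sub_and_hasSum_inv {n R : Type*} [Fintype n] [DecidableEq n]
    [CommRing R] [TopologicalSpace R] [IsTopologicalRing R] [T2Space R] {A : Matrix n n R}
    (h : Summable (A ^ ·)) : IsUnit (1 - A) ∧ HasSum (A ^ ·) (1 - A)⁻¹ := by
  have hinv := h.one_sub_mul_tsum_pow
  refine ⟨(Matrix.isUnit_iff_isUnit_det _).2 (Matrix.isUnit_det_of_right_inverse hinv), ?_⟩
  rw [Matrix.inv_eq_right_inv hinv]
  exact h.hasSum

lemma sq_mul_lt_of_lt_div_sqrt_five {α L s : ℝ} (hL : 0 < L) (hα0 : 0 < α)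
    (hα : α < s ^ 2 / (8 * √5 * L)) : 320 * (α * L) ^ 2 < s ^ 4 := by
  have h5 : √5 ^ 2 = 5 := Real.sq_sqrt (by norm_num)
  have hlt : 8 * √5 * (α * L) < s ^ 2 := by
    rw [lt_div_iff₀ (by positivity)] at hα; linarith
  have := pow_lt_pow_left₀ hlt (by positivity) two_ne_zero
  nlinarith


variable {lam L α : ℝ}

lemma lti_matrix_nonneg (hs : 0 < 1 - lam ^ 2) (i j : Fin 2) :
    0 ≤ (!![(1 + lam ^ 2) / 2, 2 * α ^ 2 * L ^ 2 / (1 - lam ^ 2);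
      18 / (1 - lam ^ 2), (3 + lam ^ 2) / 4] : Matrix (Fin 2) (Fin 2) ℝ) i j := by
  fin_cases i <;> fin_cases j <;> simp <;> positivity

lemma lti_matrix_mulVec_le (hs : 0 < 1 - lam ^ 2) (hαL : 320 * (α * L) ^ 2 < (1 - lam ^ 2) ^ 4) :
    !![(1 + lam ^ 2) / 2, 2 * α ^ 2 * L ^ 2 / (1 - lam ^ 2);
      18 / (1 - lam ^ 2), (3 + lam ^ 2) / 4] *ᵥ ![(1 - lam ^ 2) ^ 2 / 76, 1] ≤
      (1 - (1 - lam ^ 2) / 80) • ![(1 - lam ^ 2) ^ 2 / 76, 1] := by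
  set s := 1 - lam ^ 2 with hs_def
  have hlam : lam ^ 2 = 1 - s := by rw [hs_def]; ring
  intro i
  fin_cases i <;> simp [Matrix.mulVec, dotProduct, Fin.sum_univ_two, hlam]
  · rw [← sub_nonneg]
    have : (1 - s / 80) * (s ^ 2 / 76) - ((1 + (1 - s)) / 2 * (s ^ 2 / 76) + 2 * α ^ 2 * L ^ 2 / s)
        = (39 * s ^ 4 - 12160 * (α * L) ^ 2) / (6080 * s) := by field_simp; ring
    rw [this]; apply div_nonneg <;> nlinarith
  · rw [← sub_nonneg]
    have : 1 - s / 80 - (18 / s * (s ^ 2 / 76) + (3 + (1 - s)) / 4) = s / 1520 := by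
      field_simp; ring
    rw [this]; positivity

/-- The GT-SARAH LTI system matrix `G` is stable: its spectral radius is less than one
(every complex eigenvalue has modulus `< 1`), `I₂ - G` is invertible, and the Neumann
series `Σ G^k` converges to `(I₂ - G)⁻¹`. -/
theorem lti_matrix_stable (lam L α : ℝ) (hlam0 : 0 ≤ lam) (hlam1 : lam < 1) (hL : 0 < L)
    (hα0 : 0 < α) (hα : α < (1 - lam ^ 2) ^ 2 / (8 * Real.sqrt 5 * L)) :
    ∀ G : Matrix (Fin 2) (Fin 2) ℝ,
      G = !![(1 + lam ^ 2) / 2, 2 * α ^ 2 * L ^ 2 / (1 - lam ^ 2);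
             18 / (1 - lam ^ 2), (3 + lam ^ 2) / 4] →
      (∀ z ∈ spectrum ℂ (G.map (algebraMap ℝ ℂ)), ‖z‖ < 1) ∧
      IsUnit (1 - G) ∧
      HasSum (fun k : ℕ => G ^ k) (1 - G)⁻¹ := by
  rintro G rfl
  have hs : 0 < 1 - lam ^ 2 := by nlinarith
  have hG := lti_matrix_nonneg (α := α) (L := L) hs
  have hGv := lti_matrix_mulVec_le hs (sq_mul_lt_of_lt_div_sqrt_five hL hα0 hα)
  have hv : ∀ i, 0 < ![(1 - lam ^ 2) ^ 2 / 76, (1 : ℝ)] i := by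
    intro i; fin_cases i <;> simp; positivity
  have hr0 : 0 ≤ 1 - (1 - lam ^ 2) / 80 := by nlinarith [sq_nonneg lam]
  have hr1 : 1 - (1 - lam ^ 2) / 80 < 1 := by linarith
  exact ⟨fun z hz => (norm_le_of_mem_spectrum_of_mulVec_le hG hv hGv hz).trans_lt hr1,
    (summable_pow_of_mulVec_le hG hv hr0 hr1 hGv).isUnit_one_sub_and_hasSum_inv⟩
end

section
/- Let λ ∈ [0,1), L > 0, and 0 < α ≤ (1−λ²)²/(24L). Define G := [[(1+λ²)/2, 2α²L²/(1−λ²)], [18/(1−λ²), (3+λ²)/4]] and b := (0, 12α²/(1−λ²))ᵀ. Then I₂ − G is invertible, and the following entrywise inequalities hold: (I₂ − G)⁻¹ ≤ [[4/(1−λ²), 32α²L²/(1−λ²)³], [288/(1−λ²)³, 8/(1−λ²)]] and (I₂ − G)⁻¹b ≤ (384α⁴L²/(1−λ²)⁴, 96α²/(1−λ²)²)ᵀ. -/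
/-!
Writing `s = 1 - λ²`, the matrix `I₂ - G = [[s/2, -2α²L²/s], [-18/s, s/4]]` has nonpositive
off-diagonal entries, so its adjugate `[[s/4, 2α²L²/s], [18/s, s/2]]` is entrywise nonnegative.
The step-size condition gives `576 α²L² ≤ s⁴`, hence `det (I₂ - G) = s²/8 - 36α²L²/s² ≥ s²/16`.
Therefore `(I₂ - G)⁻¹ = adj / det ≤ (16/s²) · adj` entrywise, and the same holds after
multiplying by the nonnegative vector `b`; the stated bounds are exactly `(16/s²) · adj` and
`(16/s²) · adj b`.
-/

namespace Matrix

variable {n : Type*} [Fintype n] [DecidableEq n] {A : Matrix n n ℝ} {δ : ℝ}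

theorem inv_apply_le_of_adjugate_nonneg (hδ : 0 < δ) (hdet : δ ≤ A.det)
    (hadj : ∀ i j, 0 ≤ A.adjugate i j) (i j : n) :
    A⁻¹ i j ≤ δ⁻¹ * A.adjugate i j := by
  rw [inv_def, Ring.inverse_eq_inv', smul_apply, smul_eq_mul]
  exact mul_le_mul_of_nonneg_right (inv_anti₀ hδ hdet) (hadj i j)

theorem inv_mulVec_apply_le_of_adjugate_nonneg (hδ : 0 < δ) (hdet : δ ≤ A.det)
    (hadj : ∀ i j, 0 ≤ A.adjugate i j) {v : n → ℝ} (hv : 0 ≤ v) (i : n) :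
    (A⁻¹ *ᵥ v) i ≤ δ⁻¹ * (A.adjugate *ᵥ v) i := by
  rw [inv_def, Ring.inverse_eq_inv', smul_mulVec, Pi.smul_apply, smul_eq_mul]
  have hadj_v : 0 ≤ (A.adjugate *ᵥ v) i :=
    Finset.sum_nonneg fun j _ => mul_nonneg (hadj i j) (hv j)
  exact mul_le_mul_of_nonneg_right (inv_anti₀ hδ hdet) hadj_v

end Matrix

theorem sq_div_sixteen_le_det_of_le {s c : ℝ} (hs : 0 < s) (hc : 576 * c ≤ s ^ 4) :
    s ^ 2 / 16 ≤ (!![s / 2, -(2 * c / s); -(18 / s), s / 4] : Matrix (Fin 2) (Fin 2) ℝ).det := by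
  rw [Matrix.det_fin_two_of]
  have key : 36 * c / s ^ 2 ≤ s ^ 2 / 16 := by
    rw [div_le_div_iff₀ (by positivity) (by positivity)]
    nlinarith
  calc s ^ 2 / 16 ≤ s ^ 2 / 8 - 36 * c / s ^ 2 := by linarith
    _ = s / 2 * (s / 4) - -(2 * c / s) * -(18 / s) := by field_simp; ring

/-- Entrywise bounds on `(I₂ - G)⁻¹` and `(I₂ - G)⁻¹ b`. -/
theorem inv_I_sub_G_entrywise_bounds (lam L α : ℝ) (hlam0 : 0 ≤ lam) (hlam1 : lam < 1)
    (hL : 0 < L) (hα0 : 0 < α) (hα : α ≤ (1 - lam ^ 2) ^ 2 / (24 * L)) :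
    ∀ G : Matrix (Fin 2) (Fin 2) ℝ,
      G = !![(1 + lam ^ 2) / 2, 2 * α ^ 2 * L ^ 2 / (1 - lam ^ 2);
             18 / (1 - lam ^ 2), (3 + lam ^ 2) / 4] →
      IsUnit (1 - G) ∧
      (∀ i j, (1 - G)⁻¹ i j ≤
        (!![4 / (1 - lam ^ 2), 32 * α ^ 2 * L ^ 2 / (1 - lam ^ 2) ^ 3;
            288 / (1 - lam ^ 2) ^ 3, 8 / (1 - lam ^ 2)] : Matrix (Fin 2) (Fin 2) ℝ) i j) ∧
      (∀ i, (1 - G)⁻¹.mulVec ![0, 12 * α ^ 2 / (1 - lam ^ 2)] i ≤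
        ![384 * α ^ 4 * L ^ 2 / (1 - lam ^ 2) ^ 4, 96 * α ^ 2 / (1 - lam ^ 2) ^ 2] i) := by
  rintro G rfl
  set s := 1 - lam ^ 2 with hs_def
  have hs : 0 < s := by nlinarith
  have hA : 1 - !![(1 + lam ^ 2) / 2, 2 * α ^ 2 * L ^ 2 / s; 18 / s, (3 + lam ^ 2) / 4] =
      !![s / 2, -(2 * (α ^ 2 * L ^ 2) / s); -(18 / s), s / 4] := by
    ext i j
    fin_cases i <;> fin_cases j <;> simp [hs_def] <;> ring
  have hαL : 576 * (α ^ 2 * L ^ 2) ≤ s ^ 4 := by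
    rw [le_div_iff₀ (by positivity)] at hα
    nlinarith [pow_le_pow_left₀ (by positivity) hα 2]
  have hdet := sq_div_sixteen_le_det_of_le hs hαL
  have hadj_nonneg : ∀ i j,
      0 ≤ (!![s / 2, -(2 * (α ^ 2 * L ^ 2) / s); -(18 / s), s / 4]).adjugate i j := by
    intro i j
    fin_cases i <;> fin_cases j <;> simp [Matrix.adjugate_fin_two_of] <;> positivity
  have hδ : 0 < s ^ 2 / 16 := by positivity
  rw [hA]
  refine ⟨(Matrix.isUnit_iff_isUnit_det _).mpr (hδ.trans_le hdet).ne'.isUnit,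
    fun i j => (Matrix.inv_apply_le_of_adjugate_nonneg hδ hdet hadj_nonneg i j).trans_eq ?_,
    fun i => (Matrix.inv_mulVec_apply_le_of_adjugate_nonneg hδ hdet hadj_nonneg
      (fun k => by fin_cases k <;> simp; positivity) i).trans_eq ?_⟩
  · fin_cases i <;> fin_cases j <;> simp [Matrix.adjugate_fin_two_of] <;> field_simp <;> ring
  · fin_cases i <;> simp [Matrix.adjugate_fin_two_of, Matrix.mulVec, dotProduct] <;>
      field_simp <;> ring
end

section
/- Let λ ∈ [0,1), L > 0, and 0 < α < (1−λ²)²/(8√5·L). Define the 2×2 matrices G := [[(1+λ²)/2, 2α²L²/(1−λ²)], [18/(1−λ²), (3+λ²)/4]] and H := [[0, 0], [42/(1−λ²), 0]], and the vector b := (0, 12α²/(1−λ²))ᵀ. Let S ≥ 1 and q ≥ 1 be integers, let u^{t,s} ∈ ℝ² be entrywise nonnegative vectors and β^{t,s} ≥ 0 be reals for s ∈ {1,…,S} and t ∈ {0,…,q}, and set b^{t,s} := β^{t,s}·b. Suppose u^{t,s} ≤ G u^{t−1,s} + b^{t−1,s} entrywise for all s ∈ {1,…,S} and t ∈ {1,…,q},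 and u^{0,s} ≤ G u^{q,s−1} + b^{q,s−1} + Σ_{t=0}^q (b^{t,s−1} + H u^{t,s−1}) entrywise for all s ∈ {2,…,S}. Then (I₂ − (I₂ − G)⁻¹H) Σ_{s=1}^S Σ_{t=0}^q u^{t,s} ≤ (I₂ − G)⁻¹ u^{0,1} + 2(I₂ − G)⁻¹ Σ_{s=1}^S Σ_{t=0}^q b^{t,s} entrywise. -/
/-!
Summing the intra- and inter-epoch recursions over all `(t, s)` bounds every iterate other than
`u 0 1` by `G` applied to its predecessor plus forcing terms. All data being nonnegative, the sums
over predecessors can be enlarged to the full sums `V = ∑ u` and `B = ∑ β b`, which gives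
`V ≤ G V + H V + u 0 1 + 2 B`.
Under the bound on `α`, `1 - G` has nonpositive off-diagonal entries and positive determinant, so
its inverse is entrywise nonnegative; applying it to `(1 - G) V ≤ H V + u 0 1 + 2 B` gives the
claim.
-/

open Finset Matrix

namespace Matrix

variable {m n R : Type*} [Fintype n]

theorem mulVec_mono_of_nonneg_s19 [Semiring R] [PartialOrder R] [IsOrderedRing R]
    {M : Matrix m n R} (hM : ∀ i j, 0 ≤ M i j) {v w : n → R} (h : v ≤ w) :
    M *ᵥ v ≤ M *ᵥ w :=
  fun i => sum_le_sum fun j _ => mul_le_mul_of_nonneg_left (h j) (hM i j)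

theorem inv_nonneg_of_fin_two [Field R] [LinearOrder R] [IsStrictOrderedRing R]
    {A : Matrix (Fin 2) (Fin 2) R} (h00 : 0 ≤ A 0 0) (h11 : 0 ≤ A 1 1)
    (h01 : A 0 1 ≤ 0) (h10 : A 1 0 ≤ 0) (hdet : 0 < A.det) :
    ∀ i j, 0 ≤ A⁻¹ i j := by
  have hinv : 0 ≤ A.det⁻¹ := inv_nonneg.2 hdet.le
  intro i j
  rw [inv_def, adjugate_fin_two, Ring.inverse_eq_inv']
  fin_cases i <;> fin_cases j <;> simp <;> nlinarith

theorem one_sub_inv_mul_mulVec_le [DecidableEq n] [CommRing R] [PartialOrder R]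
    [IsOrderedRing R] {G H : Matrix n n R} (hG : IsUnit (1 - G).det)
    (hinv : ∀ i j, 0 ≤ (1 - G)⁻¹ i j) {v w : n → R} (h : v ≤ G *ᵥ v + H *ᵥ v + w) :
    (1 - (1 - G)⁻¹ * H) *ᵥ v ≤ (1 - G)⁻¹ *ᵥ w := by
  have hres : (1 - G) *ᵥ v ≤ H *ᵥ v + w := by
    rw [sub_mulVec, one_mulVec, sub_le_iff_le_add', ← add_assoc]
    exact h
  have hv : v ≤ ((1 - G)⁻¹ * H) *ᵥ v + (1 - G)⁻¹ *ᵥ w := by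
    calc v = (1 - G)⁻¹ *ᵥ ((1 - G) *ᵥ v) := by
          rw [mulVec_mulVec, nonsing_inv_mul _ hG, one_mulVec]
      _ ≤ (1 - G)⁻¹ *ᵥ (H *ᵥ v + w) := mulVec_mono_of_nonneg_s19 hinv hres
      _ = _ := by rw [mulVec_add, mulVec_mulVec]
  rw [sub_mulVec, one_mulVec, sub_le_iff_le_add']
  exact hv

end Matrix

section EpochRecursion

variable {n R M : Type*} [Fintype n] [Semiring R] [PartialOrder R] [IsOrderedRing R]
  {G H : Matrix n n R} {b : n → R} {S q : ℕ}

theorem sum_Icc_two_sub_one_le [AddCommMonoid M] [PartialOrder M] [IsOrderedAddMonoid M]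
    {f : ℕ → M} (hf : ∀ s ∈ Icc 1 S, 0 ≤ f s) :
    ∑ s ∈ Icc 2 S, f (s - 1) ≤ ∑ s ∈ Icc 1 S, f s := by
  rw [← sum_image (g := (· - 1)) (by intro a ha c hc h; simp at ha hc h; omega)]
  exact sum_le_sum_of_subset_of_nonneg (by intro x; simp; omega) fun s hs _ => hf s hs

theorem sum_range_add_sum_Icc_two_le [AddCommMonoid M] [PartialOrder M]
    [IsOrderedAddMonoid M] {f : ℕ → ℕ → M} (hf : ∀ s ∈ Icc 1 S, 0 ≤ f q s) :
    ∑ s ∈ Icc 1 S, ∑ t ∈ range q, f t s + ∑ s ∈ Icc 2 S, f q (s - 1)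
      ≤ ∑ s ∈ Icc 1 S, ∑ t ∈ range (q + 1), f t s := by
  simp only [sum_range_succ, sum_add_distrib]
  gcongr
  exact sum_Icc_two_sub_one_le hf

theorem sum_range_le_of_recursion {v : ℕ → n → R} {c : ℕ → R}
    (h : ∀ t ∈ Icc 1 q, v t ≤ G *ᵥ v (t - 1) + c (t - 1) • b) :
    ∑ t ∈ range (q + 1), v t ≤ v 0 + (G *ᵥ (∑ t ∈ range q, v t) + ∑ t ∈ range q, c t • b) := by
  rw [sum_range_succ', add_comm, mulVec_sum, ← sum_add_distrib]
  gcongr with t ht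
  simpa using h (t + 1) (by simp at ht ⊢; omega)

theorem sum_le_of_epoch_recursion (hS : 1 ≤ S) (hG : ∀ i j, 0 ≤ G i j)
    (hH : ∀ i j, 0 ≤ H i j) (hb : 0 ≤ b) {u : ℕ → ℕ → n → R} {β : ℕ → ℕ → R}
    (hu : ∀ s ∈ Icc 1 S, ∀ t ∈ range (q + 1), 0 ≤ u t s)
    (hβ : ∀ s ∈ Icc 1 S, ∀ t ∈ range (q + 1), 0 ≤ β t s)
    (hintra : ∀ s ∈ Icc 1 S, ∀ t ∈ Icc 1 q, u t s ≤ G *ᵥ u (t - 1) s + β (t - 1) s • b)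
    (hinter : ∀ s ∈ Icc 2 S, u 0 s ≤ G *ᵥ u q (s - 1) + β q (s - 1) • b
      + ∑ t ∈ range (q + 1), (β t (s - 1) • b + H *ᵥ u t (s - 1))) :
    ∑ s ∈ Icc 1 S, ∑ t ∈ range (q + 1), u t s
      ≤ G *ᵥ (∑ s ∈ Icc 1 S, ∑ t ∈ range (q + 1), u t s)
        + H *ᵥ (∑ s ∈ Icc 1 S, ∑ t ∈ range (q + 1), u t s)
        + (u 0 1 + (2 : R) • ∑ s ∈ Icc 1 S, ∑ t ∈ range (q + 1), β t s • b) := by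
  have hβb : ∀ s ∈ Icc 1 S, ∀ t ∈ range (q + 1), 0 ≤ β t s • b :=
    fun s hs t ht => smul_nonneg (hβ s hs t ht) hb
  have hq : q ∈ range (q + 1) := self_mem_range_succ q
  have hsplit : Icc 1 S = insert 1 (Icc 2 S) := by ext; simp; omega
  calc ∑ s ∈ Icc 1 S, ∑ t ∈ range (q + 1), u t s
      ≤ ∑ s ∈ Icc 1 S, (u 0 s + (G *ᵥ (∑ t ∈ range q, u t s)
          + ∑ t ∈ range q, β t s • b)) :=
        sum_le_sum fun s hs => sum_range_le_of_recursion (hintra s hs)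
    _ = u 0 1 + ∑ s ∈ Icc 2 S, u 0 s + G *ᵥ (∑ s ∈ Icc 1 S, ∑ t ∈ range q, u t s)
          + ∑ s ∈ Icc 1 S, ∑ t ∈ range q, β t s • b := by
        rw [sum_add_distrib, sum_add_distrib, mulVec_sum, hsplit, sum_insert (by simp),
          ← hsplit]
        simp only [add_assoc]
    _ ≤ u 0 1 + ∑ s ∈ Icc 2 S, (G *ᵥ u q (s - 1) + β q (s - 1) • b
          + ∑ t ∈ range (q + 1), (β t (s - 1) • b + H *ᵥ u t (s - 1)))
          + G *ᵥ (∑ s ∈ Icc 1 S, ∑ t ∈ range q, u t s)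
          + ∑ s ∈ Icc 1 S, ∑ t ∈ range q, β t s • b := by
        gcongr with s hs
        exact hinter s hs
    _ = G *ᵥ (∑ s ∈ Icc 1 S, ∑ t ∈ range q, u t s + ∑ s ∈ Icc 2 S, u q (s - 1))
          + H *ᵥ (∑ s ∈ Icc 2 S, ∑ t ∈ range (q + 1), u t (s - 1))
          + (u 0 1 + ((∑ s ∈ Icc 1 S, ∑ t ∈ range q, β t s • b
              + ∑ s ∈ Icc 2 S, β q (s - 1) • b)
            + ∑ s ∈ Icc 2 S, ∑ t ∈ range (q + 1), β t (s - 1) • b)) := by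
        simp only [sum_add_distrib, mulVec_sum, mulVec_add]
        abel
    _ ≤ _ := by
        rw [two_smul R]
        gcongr
        · exact mulVec_mono_of_nonneg_s19 hG (sum_range_add_sum_Icc_two_le fun s hs => hu s hs q hq)
        · exact mulVec_mono_of_nonneg_s19 hH
            (sum_Icc_two_sub_one_le fun s hs => sum_nonneg (hu s hs))
        · exact sum_range_add_sum_Icc_two_le fun s hs => hβb s hs q hq
        · exact sum_Icc_two_sub_one_le fun s hs => sum_nonneg (hβb s hs)

end EpochRecursion

section GTSarah

variable {lam L α : ℝ}

noncomputable def gtSarahG (lam L α : ℝ) : Matrix (Fin 2) (Fin 2) ℝ :=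
  !![(1 + lam ^ 2) / 2, 2 * α ^ 2 * L ^ 2 / (1 - lam ^ 2);
     18 / (1 - lam ^ 2), (3 + lam ^ 2) / 4]

theorem gtSarahG_nonneg (hlam0 : 0 ≤ lam) (hlam1 : lam < 1) :
    ∀ i j, 0 ≤ gtSarahG lam L α i j := by
  have hp : 0 < 1 - lam ^ 2 := by nlinarith
  intro i j
  fin_cases i <;> fin_cases j <;> simp [gtSarahG] <;> positivity

theorem det_one_sub_gtSarahG_pos (hlam0 : 0 ≤ lam) (hlam1 : lam < 1) (hL : 0 < L)
    (hα0 : 0 < α) (hα : α < (1 - lam ^ 2) ^ 2 / (8 * Real.sqrt 5 * L)) :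
    0 < (1 - gtSarahG lam L α).det := by
  -- `det (1 - G) = (1 - λ²)² / 8 - 36 α² L² / (1 - λ²)²`, positive once `288 α² L² < (1 - λ²)⁴`.
  have hp : 0 < 1 - lam ^ 2 := by nlinarith
  have hαL : 320 * (α * L) ^ 2 < ((1 - lam ^ 2) ^ 2) ^ 2 := by
    have h := (lt_div_iff₀ (by positivity)).1 hα
    have h5 : Real.sqrt 5 ^ 2 = 5 := Real.sq_sqrt (by norm_num)
    calc 320 * (α * L) ^ 2 = (α * (8 * Real.sqrt 5 * L)) ^ 2 := by ring_nf; rw [h5]; ring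
      _ < _ := pow_lt_pow_left₀ h (by positivity) two_ne_zero
  rw [det_fin_two]
  simp [gtSarahG]
  field_simp
  nlinarith

theorem one_sub_gtSarahG_inv_nonneg (hlam0 : 0 ≤ lam) (hlam1 : lam < 1) (hL : 0 < L)
    (hα0 : 0 < α) (hα : α < (1 - lam ^ 2) ^ 2 / (8 * Real.sqrt 5 * L)) :
    ∀ i j, 0 ≤ (1 - gtSarahG lam L α)⁻¹ i j := by
  have hp : 0 < 1 - lam ^ 2 := by nlinarith
  have hG := gtSarahG_nonneg (L := L) (α := α) hlam0 hlam1
  refine inv_nonneg_of_fin_two ?_ ?_ ?_ ?_ (det_one_sub_gtSarahG_pos hlam0 hlam1 hL hα0 hα)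
  · simp [gtSarahG]; linarith
  · simp [gtSarahG]; linarith
  · simpa using hG 0 1
  · simpa using hG 1 0

end GTSarah

theorem lti_system_solution_general (lam L α : ℝ) (hlam0 : 0 ≤ lam) (hlam1 : lam < 1) (hL : 0 < L)
    (hα0 : 0 < α) (hα : α < (1 - lam ^ 2) ^ 2 / (8 * Real.sqrt 5 * L))
    (S q : ℕ) (hS : 1 ≤ S)
    (u : ℕ → ℕ → Fin 2 → ℝ) (β : ℕ → ℕ → ℝ)
    (hu : ∀ s ∈ Icc 1 S, ∀ t ∈ range (q + 1), ∀ i, 0 ≤ u t s i)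
    (hβ : ∀ s ∈ Icc 1 S, ∀ t ∈ range (q + 1), 0 ≤ β t s) :
    ∀ (G H : Matrix (Fin 2) (Fin 2) ℝ) (bv : Fin 2 → ℝ),
      G = !![(1 + lam ^ 2) / 2, 2 * α ^ 2 * L ^ 2 / (1 - lam ^ 2);
             18 / (1 - lam ^ 2), (3 + lam ^ 2) / 4] →
      H = !![0, 0; 42 / (1 - lam ^ 2), 0] →
      bv = ![0, 12 * α ^ 2 / (1 - lam ^ 2)] →
      (∀ s ∈ Icc 1 S, ∀ t ∈ Icc 1 q, ∀ i,
        u t s i ≤ G.mulVec (u (t - 1) s) i + β (t - 1) s * bv i) →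
      (∀ s ∈ Icc 2 S, ∀ i,
        u 0 s i ≤ G.mulVec (u q (s - 1)) i + β q (s - 1) * bv i
          + ∑ t ∈ range (q + 1), (β t (s - 1) * bv i + H.mulVec (u t (s - 1)) i)) →
      ∀ i, (1 - (1 - G)⁻¹ * H).mulVec (∑ s ∈ Icc 1 S, ∑ t ∈ range (q + 1), u t s) i
        ≤ (1 - G)⁻¹.mulVec (u 0 1) i
          + 2 * (1 - G)⁻¹.mulVec
              (∑ s ∈ Icc 1 S, ∑ t ∈ range (q + 1), fun j => β t s * bv j) i := by
  intro G H bv hG hHdef hbdef hintra hinter i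
  obtain rfl : G = gtSarahG lam L α := hG
  have hp : 0 < 1 - lam ^ 2 := by nlinarith
  have hH : ∀ i j, 0 ≤ H i j := by
    subst hHdef; intro i j; fin_cases i <;> fin_cases j <;> simp; positivity
  have hb : 0 ≤ bv := by
    subst hbdef; intro j; fin_cases j <;> simp; positivity
  have hsum := sum_le_of_epoch_recursion hS (gtSarahG_nonneg hlam0 hlam1) hH hb hu hβ hintra
    (fun s hs j => by
      simp only [Pi.add_apply, Finset.sum_apply, Pi.smul_apply, smul_eq_mul]
      exact hinter s hs j)
  have hunit := (det_one_sub_gtSarahG_pos hlam0 hlam1 hL hα0 hα).ne'.isUnit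
  have := one_sub_inv_mul_mulVec_le hunit
    (one_sub_gtSarahG_inv_nonneg hlam0 hlam1 hL hα0 hα) hsum i
  rw [mulVec_add, mulVec_smul] at this
  exact this

/-- Solving the GT-SARAH LTI error system. -/
theorem lti_system_solution (lam L α : ℝ) (hlam0 : 0 ≤ lam) (hlam1 : lam < 1) (hL : 0 < L)
    (hα0 : 0 < α) (hα : α < (1 - lam ^ 2) ^ 2 / (8 * Real.sqrt 5 * L))
    (S q : ℕ) (hS : 1 ≤ S) (hq : 1 ≤ q)
    (u : ℕ → ℕ → Fin 2 → ℝ) (β : ℕ → ℕ → ℝ)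
    (hu : ∀ s ∈ Icc 1 S, ∀ t ∈ range (q + 1), ∀ i, 0 ≤ u t s i)
    (hβ : ∀ s ∈ Icc 1 S, ∀ t ∈ range (q + 1), 0 ≤ β t s) :
    ∀ (G H : Matrix (Fin 2) (Fin 2) ℝ) (bv : Fin 2 → ℝ),
      G = !![(1 + lam ^ 2) / 2, 2 * α ^ 2 * L ^ 2 / (1 - lam ^ 2);
             18 / (1 - lam ^ 2), (3 + lam ^ 2) / 4] →
      H = !![0, 0; 42 / (1 - lam ^ 2), 0] →
      bv = ![0, 12 * α ^ 2 / (1 - lam ^ 2)] →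
      (∀ s ∈ Icc 1 S, ∀ t ∈ Icc 1 q, ∀ i,
        u t s i ≤ G.mulVec (u (t - 1) s) i + β (t - 1) s * bv i) →
      (∀ s ∈ Icc 2 S, ∀ i,
        u 0 s i ≤ G.mulVec (u q (s - 1)) i + β q (s - 1) * bv i
          + ∑ t ∈ range (q + 1), (β t (s - 1) * bv i + H.mulVec (u t (s - 1)) i)) →
      ∀ i, (1 - (1 - G)⁻¹ * H).mulVec (∑ s ∈ Icc 1 S, ∑ t ∈ range (q + 1), u t s) i
        ≤ (1 - G)⁻¹.mulVec (u 0 1) i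
          + 2 * (1 - G)⁻¹.mulVec
              (∑ s ∈ Icc 1 S, ∑ t ∈ range (q + 1), fun j => β t s * bv j) i :=
  lti_system_solution_general lam L α hlam0 hlam1 hL hα0 hα S q hS u β hu hβ
end
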